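/- Let m ∈ ℕ, γ ∈ (0,1], α ∈ (0,1]. Suppose there exist functions ũ : ℝ^m × 𝒟₁(ℝ^m) → ℝ (written ũ_c(ν)), r̃ : ℝ^m × ℝ^m → ℝ, and a binary relation ≽ on 𝒟₁(ℝ^m) such that: (1) for all c, r', g ∈ ℝ^m, ũ_c(δ_{r' + γ·g}) = r̃(c, r') + α·ũ_{γ⁻¹·(c + r')}(δ_g); (2) for all c ∈ ℝ^m and all ν, ν' ∈ 𝒟₁(ℝ^m), T_c ν ≽ T_c ν' if and only if ũ_c(ν) ≥ ũ_c(ν'), where T_c μ is the pushforward of μ under x ↦ c + x; (3) for all c ∈ ℝ^m, the map g ↦ ũ_c(δ_g) is Borel measurable, ν-integrable, and ũ_c(ν) = ∫ ũ_c(δ_g) dν(g) for all ν ∈ 𝒟₁(ℝ^m). Then ≽ satisfies: completeness (for all ν, ν', ν ≽ ν' or ν' ≽ ν); transitivity; independence (for all ν, ν', ν̄: ν ≽ ν' if and only if for all p ∈ (0,1), p·ν + (1−p)·ν̄ ≽ p·ν' + (1−p)·ν̄); continuity (for all ν, ν', ν̄: if ν ≽ ν̄ and ν̄ ≽ ν',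 then there exists p ∈ [0,1] with p·ν + (1−p)·ν' ≽ ν̄ and ν̄ ≽ p·ν + (1−p)·ν'); and fixed discount indifference with parameter α (for all ν, ν', the measures (1/(1+α))·S_γ ν + (α/(1+α))·ν' and (1/(1+α))·S_γ ν' + (α/(1+α))·ν are each ≽ the other, where S_γ μ is the pushforward of μ under x ↦ γ·x). -/
import Mathlib


open MeasureTheory

noncomputable section

abbrev Rm (m : ℕ) := Fin m → ℝ

/-- The ℓ¹ norm on ℝ^m. -/
def norm1 {m : ℕ} (x : Rm m) : ℝ := ∑ i, |x i|

/-- Finite first moment with respect to the ℓ¹ norm. -/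
def FiniteFirstMoment {m : ℕ} (ν : Measure (Rm m)) : Prop :=
  Integrable (fun x => norm1 x) ν

/-- Membership in `𝒟₁(ℝ^m)`. -/
def MemD1 {m : ℕ} (ν : Measure (Rm m)) : Prop :=
  IsProbabilityMeasure ν ∧ FiniteFirstMoment ν

/-- Pushforward of `ν` under translation by `c`. -/
def Tshift {m : ℕ} (c : Rm m) (ν : Measure (Rm m)) : Measure (Rm m) :=
  ν.map (fun x => c + x)

/-- Pushforward of `ν` under scaling by `γ`. -/
def Sgamma {m : ℕ} (γ : ℝ) (ν : Measure (Rm m)) : Measure (Rm m) :=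
  ν.map (fun x => γ • x)

/-- The setwise convex combination `p·ν + (1−p)·ν'`. -/
def mixP {m : ℕ} (p : ℝ) (ν ν' : Measure (Rm m)) : Measure (Rm m) :=
  (ENNReal.ofReal p) • ν + (ENNReal.ofReal (1 - p)) • ν'

/-- The mixture `(1/(1+α))·S_γ ν + (α/(1+α))·ν'` (setwise convex combination). -/
def discountMix {m : ℕ} (γ α : ℝ) (ν ν' : Measure (Rm m)) : Measure (Rm m) :=
  (ENNReal.ofReal (1 / (1 + α))) • Sgamma γ ν + (ENNReal.ofReal (α / (1 + α))) • ν'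

/-- If a preference on `𝒟₁(ℝ^m)` is, after every stock shift `c`, equivalent to a
stock-indexed linear utility `ũ_c` satisfying the Bellman-type identity (1), then the
preference satisfies completeness, transitivity, independence, continuity, and fixed
discount indifference with parameter `α`. -/
theorem vnm_stock_augmented (m : ℕ) (hm : 1 ≤ m) (γ α : ℝ)
    (hγ : γ ∈ Set.Ioc (0 : ℝ) 1) (hα : α ∈ Set.Ioc (0 : ℝ) 1)
    (utilde : Rm m → Measure (Rm m) → ℝ)
    (rtilde : Rm m → Rm m → ℝ)
    (pref : Measure (Rm m) → Measure (Rm m) → Prop)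
    (h1 : ∀ c r' g : Rm m,
      utilde c (Measure.dirac (r' + γ • g)) =
        rtilde c r' + α * utilde (γ⁻¹ • (c + r')) (Measure.dirac g))
    (h2 : ∀ c : Rm m, ∀ ν ν' : Measure (Rm m), MemD1 ν → MemD1 ν' →
      (pref (Tshift c ν) (Tshift c ν') ↔ utilde c ν' ≤ utilde c ν))
    (h3meas : ∀ c : Rm m, Measurable (fun g : Rm m => utilde c (Measure.dirac g)))
    (h3int : ∀ c : Rm m, ∀ ν : Measure (Rm m), MemD1 ν →
      Integrable (fun g => utilde c (Measure.dirac g)) ν)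
    (h3lin : ∀ c : Rm m, ∀ ν : Measure (Rm m), MemD1 ν →
      utilde c ν = ∫ g, utilde c (Measure.dirac g) ∂ν) :
    -- completeness
    (∀ ν ν' : Measure (Rm m), MemD1 ν → MemD1 ν' → pref ν ν' ∨ pref ν' ν) ∧
    -- transitivity
    (∀ ν ν' ν'' : Measure (Rm m), MemD1 ν → MemD1 ν' → MemD1 ν'' →
      pref ν ν' → pref ν' ν'' → pref ν ν'') ∧
    -- independence
    (∀ ν ν' νbar : Measure (Rm m), MemD1 ν → MemD1 ν' → MemD1 νbar →
      (pref ν ν' ↔ ∀ p : ℝ, p ∈ Set.Ioo (0 : ℝ) 1 →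
        pref (mixP p ν νbar) (mixP p ν' νbar))) ∧
    -- continuity
    (∀ ν ν' νbar : Measure (Rm m), MemD1 ν → MemD1 ν' → MemD1 νbar →
      pref ν νbar → pref νbar ν' →
      ∃ p : ℝ, p ∈ Set.Icc (0 : ℝ) 1 ∧
        pref (mixP p ν ν') νbar ∧ pref νbar (mixP p ν ν')) ∧
    -- fixed discount indifference with parameter α
    (∀ ν ν' : Measure (Rm m), MemD1 ν → MemD1 ν' →
      pref (discountMix γ α ν ν') (discountMix γ α ν' ν) ∧
      pref (discountMix γ α ν' ν) (discountMix γ α ν ν')) := by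
  obtain ⟨hγ0, hγ1⟩ := hγ
  obtain ⟨hα0, hα1⟩ := hα
  have h1α : (0:ℝ) < 1 + α := by linarith
  have hT0 : ∀ ν : Measure (Rm m), Tshift (0 : Rm m) ν = ν := by
    intro ν; simp [Tshift]
  have key : ∀ ν ν' : Measure (Rm m), MemD1 ν → MemD1 ν' →
      (pref ν ν' ↔ utilde 0 ν' ≤ utilde 0 ν) := by
    intro ν ν' h h'
    have := h2 0 ν ν' h h'
    rwa [hT0, hT0] at this
  have normMeas : Measurable (fun x : Rm m => norm1 x) := by
    unfold norm1
    exact Finset.measurable_sum _ fun i _ => (measurable_pi_apply i).abs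
  -- mixtures stay in D1
  have memMix : ∀ p : ℝ, 0 ≤ p → p ≤ 1 → ∀ ν ν' : Measure (Rm m),
      MemD1 ν → MemD1 ν' → MemD1 (mixP p ν ν') := by
    rintro p hp0 hp1 ν ν' ⟨hν, hνi⟩ ⟨hν', hν'i⟩
    refine ⟨⟨?_⟩, ?_⟩
    · have : (ENNReal.ofReal p) * 1 + (ENNReal.ofReal (1 - p)) * 1 = 1 := by
        rw [mul_one, mul_one, ← ENNReal.ofReal_add hp0 (by linarith : (0:ℝ) ≤ 1 - p)]
        norm_num
      simpa [mixP, Measure.add_apply, Measure.smul_apply, measure_univ, smul_eq_mul]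
        using this
    · exact (hνi.smul_measure ENNReal.ofReal_ne_top).add_measure
        (hν'i.smul_measure ENNReal.ofReal_ne_top)
  -- value of mixtures
  have uMix : ∀ p : ℝ, 0 ≤ p → p ≤ 1 → ∀ ν ν' : Measure (Rm m),
      MemD1 ν → MemD1 ν' →
      utilde 0 (mixP p ν ν') = p * utilde 0 ν + (1 - p) * utilde 0 ν' := by
    intro p hp0 hp1 ν ν' hν hν'
    rw [h3lin 0 _ (memMix p hp0 hp1 ν ν' hν hν'), h3lin 0 ν hν, h3lin 0 ν' hν']
    rw [mixP, integral_add_measure ((h3int 0 ν hν).smul_measure ENNReal.ofReal_ne_top)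
        ((h3int 0 ν' hν').smul_measure ENNReal.ofReal_ne_top),
      integral_smul_measure, integral_smul_measure,
      ENNReal.toReal_ofReal hp0, ENNReal.toReal_ofReal (by linarith : (0:ℝ) ≤ 1 - p)]
    simp [smul_eq_mul]
  -- Sgamma stays in D1
  have hmapγ : Measurable (fun x : Rm m => γ • x) := measurable_const_smul γ
  have memS : ∀ ν : Measure (Rm m), MemD1 ν → MemD1 (Sgamma γ ν) := by
    rintro ν ⟨hν, hνi⟩
    constructor
    · exact Measure.isProbabilityMeasure_map hmapγ.aemeasurable
    · rw [FiniteFirstMoment, Sgamma,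
        integrable_map_measure normMeas.aestronglyMeasurable hmapγ.aemeasurable]
      have heq : (fun x : Rm m => norm1 x) ∘ (fun x : Rm m => γ • x)
          = fun x => |γ| * norm1 x := by
        funext x
        simp [Function.comp, norm1, Finset.mul_sum, abs_mul]
      rw [heq]
      exact hνi.const_mul _
  -- Bellman identity at c = 0
  have hR : ∀ g : Rm m, utilde 0 (Measure.dirac (γ • g))
      = rtilde 0 0 + α * utilde 0 (Measure.dirac g) := by
    intro g
    have := h1 0 0 g
    simpa using this
  -- value of Sgamma
  have uS : ∀ ν : Measure (Rm m), MemD1 ν →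
      utilde 0 (Sgamma γ ν) = rtilde 0 0 + α * utilde 0 ν := by
    intro ν hν
    haveI := hν.1
    rw [h3lin 0 _ (memS ν hν), Sgamma,
      integral_map hmapγ.aemeasurable (h3meas 0).aestronglyMeasurable]
    have heq : (fun g : Rm m => utilde 0 (Measure.dirac (γ • g)))
        = fun g => rtilde 0 0 + α * utilde 0 (Measure.dirac g) := funext fun g => hR g
    rw [heq, integral_add (integrable_const _) ((h3int 0 ν hν).const_mul α),
      integral_const, integral_const_mul]
    simp [measure_univ, ← h3lin 0 ν hν]
  -- discountMix stays in D1
  have hd0 : (0:ℝ) ≤ 1 / (1 + α) := by positivity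
  have hd1 : (0:ℝ) ≤ α / (1 + α) := by positivity
  have memD : ∀ ν ν' : Measure (Rm m), MemD1 ν → MemD1 ν' →
      MemD1 (discountMix γ α ν ν') := by
    intro ν ν' hν hν'
    obtain ⟨hSp, hSi⟩ := memS ν hν
    obtain ⟨hν'p, hν'i⟩ := hν'
    refine ⟨⟨?_⟩, ?_⟩
    · have : (ENNReal.ofReal (1 / (1 + α))) * 1 + (ENNReal.ofReal (α / (1 + α))) * 1 = 1 := by
        rw [mul_one, mul_one, ← ENNReal.ofReal_add hd0 hd1]
        rw [show 1 / (1 + α) + α / (1 + α) = 1 by field_simp]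
        norm_num
      simpa [discountMix, Measure.add_apply, Measure.smul_apply, hSp.measure_univ,
        hν'p.measure_univ, smul_eq_mul] using this
    · exact (hSi.smul_measure ENNReal.ofReal_ne_top).add_measure
        (hν'i.smul_measure ENNReal.ofReal_ne_top)
  -- value of discountMix
  have uD : ∀ ν ν' : Measure (Rm m), MemD1 ν → MemD1 ν' →
      utilde 0 (discountMix γ α ν ν')
        = (1 / (1 + α)) * (rtilde 0 0 + α * utilde 0 ν)
          + (α / (1 + α)) * utilde 0 ν' := by
    intro ν ν' hν hν'
    rw [h3lin 0 _ (memD ν ν' hν hν'), discountMix,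
      integral_add_measure ((h3int 0 _ (memS ν hν)).smul_measure ENNReal.ofReal_ne_top)
        ((h3int 0 ν' hν').smul_measure ENNReal.ofReal_ne_top),
      integral_smul_measure, integral_smul_measure,
      ENNReal.toReal_ofReal hd0, ENNReal.toReal_ofReal hd1,
      ← h3lin 0 _ (memS ν hν), ← h3lin 0 ν' hν', uS ν hν]
    simp [smul_eq_mul]
  refine ⟨?_, ?_, ?_, ?_, ?_⟩
  · -- completeness
    intro ν ν' hν hν'
    rcases le_total (utilde 0 ν') (utilde 0 ν) with h | h
    · exact Or.inl ((key ν ν' hν hν').2 h)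
    · exact Or.inr ((key ν' ν hν' hν).2 h)
  · -- transitivity
    intro ν ν' ν'' hν hν' hν'' h12 h23
    exact (key ν ν'' hν hν'').2
      (le_trans ((key ν' ν'' hν' hν'').1 h23) ((key ν ν' hν hν').1 h12))
  · -- independence
    intro ν ν' νbar hν hν' hνb
    constructor
    · intro h p hp
      have hle := (key ν ν' hν hν').1 h
      refine (key _ _ (memMix p hp.1.le hp.2.le ν νbar hν hνb)
        (memMix p hp.1.le hp.2.le ν' νbar hν' hνb)).2 ?_
      rw [uMix p hp.1.le hp.2.le ν νbar hν hνb, uMix p hp.1.le hp.2.le ν' νbar hν' hνb]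
      nlinarith [hp.1]
    · intro h
      have := (key _ _ (memMix (1/2) (by norm_num) (by norm_num) ν νbar hν hνb)
        (memMix (1/2) (by norm_num) (by norm_num) ν' νbar hν' hνb)).1
        (h (1/2) (by norm_num))
      rw [uMix (1/2) (by norm_num) (by norm_num) ν νbar hν hνb,
        uMix (1/2) (by norm_num) (by norm_num) ν' νbar hν' hνb] at this
      exact (key ν ν' hν hν').2 (by linarith)
  · -- continuity
    intro ν ν' νbar hν hν' hνb h1' h2'
    have ha := (key ν νbar hν hνb).1 h1'
    have hb := (key νbar ν' hνb hν').1 h2'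
    by_cases hcase : utilde 0 ν = utilde 0 ν'
    · refine ⟨1, ⟨zero_le_one, le_refl 1⟩, ?_, ?_⟩
      · refine (key _ _ (memMix 1 zero_le_one le_rfl ν ν' hν hν') hνb).2 ?_
        rw [uMix 1 zero_le_one le_rfl ν ν' hν hν']; linarith
      · refine (key _ _ hνb (memMix 1 zero_le_one le_rfl ν ν' hν hν')).2 ?_
        rw [uMix 1 zero_le_one le_rfl ν ν' hν hν']; linarith
    · have hlt : utilde 0 ν' < utilde 0 ν := lt_of_le_of_ne (le_trans hb ha) (Ne.symm hcase)
      set p : ℝ := (utilde 0 νbar - utilde 0 ν') / (utilde 0 ν - utilde 0 ν') with hp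
      have hp0 : 0 ≤ p := div_nonneg (by linarith) (by linarith)
      have hp1 : p ≤ 1 := by
        rw [hp, div_le_one (by linarith)]; linarith
      have hne : utilde 0 ν - utilde 0 ν' ≠ 0 := ne_of_gt (by linarith)
      have hval : p * utilde 0 ν + (1 - p) * utilde 0 ν' = utilde 0 νbar := by
        rw [hp]; field_simp [hne]; ring
      refine ⟨p, ⟨hp0, hp1⟩, ?_, ?_⟩
      · refine (key _ _ (memMix p hp0 hp1 ν ν' hν hν') hνb).2 ?_
        rw [uMix p hp0 hp1 ν ν' hν hν', hval]
      · refine (key _ _ hνb (memMix p hp0 hp1 ν ν' hν hν')).2 ?_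
        rw [uMix p hp0 hp1 ν ν' hν hν', hval]
  · -- fixed discount indifference
    intro ν ν' hν hν'
    have hsym : utilde 0 (discountMix γ α ν ν') = utilde 0 (discountMix γ α ν' ν) := by
      rw [uD ν ν' hν hν', uD ν' ν hν' hν]; ring
    exact ⟨(key _ _ (memD ν ν' hν hν') (memD ν' ν hν' hν)).2 (le_of_eq hsym.symm),
      (key _ _ (memD ν' ν hν' hν) (memD ν ν' hν hν')).2 (le_of_eq hsym)⟩
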